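/- arXiv:2310.04593 — 2 statements merged into one kernel-verified Lean document; each statement's English description precedes it below -/
import Mathlib

section
/- Let T be a Perov contraction on a vector-valued metric space (V,d) with nonnegative coefficient matrix B satisfying ρ(B) < 1. Then there exists k ∈ ℕ such that the k-th iterate T^k is a contraction with respect to the metric ‖d‖(v₁,v₂) = maxₙ dₙ(v₁,v₂), i.e., there exists β ∈ [0,1) with ‖d‖(T^k v₁, T^k v₂) ≤ β ‖d‖(v₁,v₂) for all v₁,v₂. -/
/-! By Gelfand's formula some power `B ^ k` has `∞`-operator norm (maximal absolute row sum)
`β < 1`. Since `B` is entrywise nonnegative, the bound `d (T v₁) (T v₂) ≤ B *ᵥ d v₁ v₂` can be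
iterated to `d (T^[k] v₁) (T^[k] v₂) ≤ B ^ k *ᵥ d v₁ v₂`, and on nonnegative vectors the maximum
of the entries is the sup norm, which `B ^ k` contracts by the factor `β`. -/

/-- Spectral radius of a real square matrix. -/
noncomputable def specRad {n : Type*} [Fintype n] [DecidableEq n]
    (B : Matrix n n ℝ) : ℝ :=
  sSup {r : ℝ | ∃ μ ∈ spectrum ℂ (B.map (Complex.ofReal ·)), r = ‖μ‖}

open scoped ENNReal NNReal
open Filter Matrix

attribute [local instance] Matrix.linftyOpNormedAddCommGroup Matrix.linftyOpNormedRing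
  Matrix.linftyOpNormedAlgebra

theorem exists_norm_pow_lt_one_of_spectralRadius_lt_one {A : Type*} [NormedRing A]
    [NormedAlgebra ℂ A] [CompleteSpace A] {a : A} (ha : spectralRadius ℂ a < 1) :
    ∃ k : ℕ, 0 < k ∧ ‖a ^ k‖ < 1 := by
  have hev : ∀ᶠ k : ℕ in atTop, (‖a ^ k‖₊ : ℝ≥0∞) ^ (1 / (k : ℝ)) < 1 :=
    (spectrum.pow_nnnorm_pow_one_div_tendsto_nhds_spectralRadius a).eventually
      (gt_mem_nhds ha)
  obtain ⟨k, hlt, hk⟩ := (hev.and (eventually_gt_atTop 0)).exists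
  refine ⟨k, hk, ?_⟩
  have h := (ENNReal.rpow_inv_lt_iff (Nat.cast_pos.2 hk)).1 (by simpa using hlt)
  rw [ENNReal.one_rpow] at h
  exact_mod_cast h

theorem spectralRadius_map_ofReal_le_specRad {n : Type*} [Fintype n] [DecidableEq n]
    (B : Matrix n n ℝ) :
    spectralRadius ℂ (B.map (Complex.ofReal ·)) ≤ ENNReal.ofReal (specRad B) := by
  have hbdd :
      BddAbove {r : ℝ | ∃ μ ∈ spectrum ℂ (B.map (Complex.ofReal ·)), r = ‖μ‖} := by
    obtain ⟨C, hC⟩ := ((spectrum.isCompact (B.map (Complex.ofReal ·))).image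
      (continuous_norm (E := ℂ))).bddAbove
    exact ⟨C, fun r ⟨μ, hμ, hr⟩ => hr ▸ hC ⟨μ, hμ, rfl⟩⟩
  refine iSup₂_le fun μ hμ => ?_
  rw [← enorm_eq_nnnorm, ← ofReal_norm]
  exact ENNReal.ofReal_le_ofReal (le_csSup hbdd ⟨μ, hμ, rfl⟩)

theorem Matrix.linfty_opNorm_map_ofReal {m n : Type*} [Fintype m] [Fintype n]
    (A : Matrix m n ℝ) : ‖A.map (Complex.ofReal ·)‖ = ‖A‖ := by
  simp [linfty_opNorm_def]

theorem Matrix.exists_linfty_opNorm_pow_lt_one_of_specRad_lt_one {n : Type*} [Fintype n]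
    [DecidableEq n] {B : Matrix n n ℝ} (hρ : specRad B < 1) :
    ∃ k : ℕ, 0 < k ∧ ‖B ^ k‖ < 1 := by
  have hB : spectralRadius ℂ (B.map (Complex.ofReal ·)) < 1 :=
    (spectralRadius_map_ofReal_le_specRad B).trans_lt (ENNReal.ofReal_lt_one.2 hρ)
  obtain ⟨k, hk, hlt⟩ := exists_norm_pow_lt_one_of_spectralRadius_lt_one hB
  refine ⟨k, hk, ?_⟩
  rw [← linfty_opNorm_map_ofReal]
  exact (congrArg norm (Matrix.map_pow B Complex.ofRealHom k)).trans_lt hlt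

section Nonneg

variable {n R : Type*} [Fintype n] [Semiring R] [PartialOrder R] [IsOrderedRing R]

theorem Matrix.mulVec_mono_of_nonneg {B : Matrix n n R} (hB : ∀ i j, 0 ≤ B i j) {x y : n → R}
    (hxy : x ≤ y) : B *ᵥ x ≤ B *ᵥ y :=
  fun i => dotProduct_le_dotProduct_of_nonneg_left hxy (hB i)

theorem iterate_le_pow_mulVec {V : Type*} [DecidableEq n]
    (d : V → V → n → R) {B : Matrix n n R} (hB : ∀ i j, 0 ≤ B i j) {T : V → V}
    (hT : ∀ v₁ v₂, d (T v₁) (T v₂) ≤ B *ᵥ d v₁ v₂) (k : ℕ) (v₁ v₂ : V) :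
    d (T^[k] v₁) (T^[k] v₂) ≤ (B ^ k) *ᵥ d v₁ v₂ := by
  induction k generalizing v₁ v₂ with
  | zero => simp
  | succ k ih =>
    calc d (T^[k + 1] v₁) (T^[k + 1] v₂) ≤ (B ^ k) *ᵥ d (T v₁) (T v₂) := ih (T v₁) (T v₂)
      _ ≤ (B ^ k) *ᵥ (B *ᵥ d v₁ v₂) :=
        mulVec_mono_of_nonneg (pow_apply_nonneg hB k) (hT v₁ v₂)
      _ = (B ^ (k + 1)) *ᵥ d v₁ v₂ := by rw [mulVec_mulVec, pow_succ]

end Nonneg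

section SupNorm

variable {ι : Type*} [Fintype ι] {x y : ι → ℝ}

theorem iSup_eq_pi_norm_of_nonneg (hx : 0 ≤ x) : ⨆ i, x i = ‖x‖ := by
  refine le_antisymm (Real.iSup_le (fun i => (le_abs_self _).trans (norm_le_pi_norm x i))
    (norm_nonneg _)) ((pi_norm_le_iff_of_nonneg (Real.iSup_nonneg hx)).2 fun i => ?_)
  rw [Real.norm_of_nonneg (hx i)]
  exact le_ciSup (Set.finite_range x).bddAbove i

theorem pi_norm_le_pi_norm_of_nonneg_of_le (hx : 0 ≤ x) (hxy : x ≤ y) : ‖x‖ ≤ ‖y‖ :=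
  (pi_norm_le_iff_of_nonneg (norm_nonneg y)).2 fun i => by
    rw [Real.norm_of_nonneg (hx i)]
    exact (hxy i).trans ((le_abs_self _).trans (norm_le_pi_norm y i))

end SupNorm

theorem stmt_3_general {V : Type*} {N : ℕ} (d : V → V → Fin N → ℝ)
    (hnn : ∀ v₁ v₂ n, 0 ≤ d v₁ v₂ n)
    (B : Matrix (Fin N) (Fin N) ℝ) (hB : ∀ m n, 0 ≤ B m n)
    (hρ : specRad B < 1)
    (T : V → V)
    (hT : ∀ v₁ v₂ n, d (T v₁) (T v₂) n ≤ (B.mulVec (d v₁ v₂)) n) :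
    ∃ (k : ℕ) (β : ℝ), 0 < k ∧ 0 ≤ β ∧ β < 1 ∧
      ∀ v₁ v₂ : V, (⨆ n, d (T^[k] v₁) (T^[k] v₂) n) ≤ β * ⨆ n, d v₁ v₂ n := by
  obtain ⟨k, hk, hβ⟩ := exists_linfty_opNorm_pow_lt_one_of_specRad_lt_one hρ
  refine ⟨k, ‖B ^ k‖, hk, norm_nonneg _, hβ, fun v₁ v₂ => ?_⟩
  rw [iSup_eq_pi_norm_of_nonneg (hnn _ _), iSup_eq_pi_norm_of_nonneg (hnn _ _)]
  calc ‖d (T^[k] v₁) (T^[k] v₂)‖ ≤ ‖(B ^ k) *ᵥ d v₁ v₂‖ :=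
        pi_norm_le_pi_norm_of_nonneg_of_le (hnn _ _)
          (iterate_le_pow_mulVec d hB (fun _ _ => hT _ _) k v₁ v₂)
    _ ≤ ‖B ^ k‖ * ‖d v₁ v₂‖ := linfty_opNorm_mulVec _ _

/-- A Perov contraction is an eventual contraction: some iterate `T^k` is a
contraction with respect to the metric `‖d‖(v₁,v₂) = max_n dₙ(v₁,v₂)`. -/
theorem stmt_3 {V : Type*} {N : ℕ} (d : V → V → Fin N → ℝ)
    (hnn : ∀ v₁ v₂ n, 0 ≤ d v₁ v₂ n)
    (heq : ∀ v₁ v₂, d v₁ v₂ = 0 ↔ v₁ = v₂)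
    (hsymm : ∀ v₁ v₂, d v₁ v₂ = d v₂ v₁)
    (htri : ∀ v₁ v₂ v₃ n, d v₁ v₃ n ≤ d v₁ v₂ n + d v₂ v₃ n)
    (B : Matrix (Fin N) (Fin N) ℝ) (hB : ∀ m n, 0 ≤ B m n)
    (hρ : specRad B < 1)
    (T : V → V)
    (hT : ∀ v₁ v₂ n, d (T v₁) (T v₂) n ≤ (B.mulVec (d v₁ v₂)) n) :
    ∃ (k : ℕ) (β : ℝ), 0 < k ∧ 0 ≤ β ∧ β < 1 ∧
      ∀ v₁ v₂ : V, (⨆ n, d (T^[k] v₁) (T^[k] v₂) n) ≤ β * ⨆ n, d v₁ v₂ n :=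
  stmt_3_general d hnn B hB hρ T hT
end

section
/- Generalized Blackwell sufficient condition: Let X be a set and V a space of functions v : X → ℝ^N closed under addition of nonnegative constant vectors, on which dₙ(u,v) := sup_{x∈X} |uₙ(x) − vₙ(x)| is finite for all u,v ∈ V and all n. Suppose T : V → V is monotone (u ≤ v pointwise entrywise implies Tu ≤ Tv) and satisfies discounting: there exists a nonnegative matrix B ∈ ℝ^{N×N} with ρ(B) < 1 such that T(v + c) ≤ Tv + Bc for all v ∈ V and c ∈ ℝ₊^N (with c interpreted as a constant function). Then T is a Perov contraction with coefficient matrix B: d(Tv₁,Tv₂) ≤ B d(v₁,v₂) entrywise for all v₁,v₂ ∈ V. -/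
section PerovContraction

variable {X ι : Type*}

noncomputable def supDist (u v : X → ι → ℝ) (n : ι) : ℝ :=
  ⨆ x, |u x n - v x n|

lemma supDist_nonneg (u v : X → ι → ℝ) (n : ι) : 0 ≤ supDist u v n :=
  Real.iSup_nonneg fun _ => abs_nonneg _

lemma le_add_supDist {u v : X → ι → ℝ} {n : ι}
    (h : BddAbove (Set.range fun x => |u x n - v x n|)) (x : X) :
    u x n ≤ v x n + supDist u v n := by
  have := (abs_le.mp (le_ciSup h x)).2
  rw [supDist]
  linarith

lemma mulVec_nonneg_of_nonneg [Fintype ι] {B : Matrix ι ι ℝ} (hB : ∀ m n, 0 ≤ B m n)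
    {c : ι → ℝ} (hc : ∀ n, 0 ≤ c n) (m : ι) : 0 ≤ B.mulVec c m :=
  Finset.sum_nonneg fun n _ => mul_nonneg (hB m n) (hc n)

lemma sub_le_mulVec_of_le_add [Fintype ι] {V : Set (X → ι → ℝ)}
    (hshift : ∀ v ∈ V, ∀ c : ι → ℝ, (∀ n, 0 ≤ c n) → (fun x n => v x n + c n) ∈ V)
    {B : Matrix ι ι ℝ} {T : (X → ι → ℝ) → (X → ι → ℝ)}
    (hmono : ∀ u ∈ V, ∀ v ∈ V, (∀ x n, u x n ≤ v x n) → ∀ x n, T u x n ≤ T v x n)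
    (hdisc : ∀ v ∈ V, ∀ c : ι → ℝ, (∀ n, 0 ≤ c n) →
      ∀ x m, T (fun x n => v x n + c n) x m ≤ T v x m + B.mulVec c m)
    {u w : X → ι → ℝ} (hu : u ∈ V) (hw : w ∈ V) {c : ι → ℝ} (hc : ∀ n, 0 ≤ c n)
    (hle : ∀ x n, u x n ≤ w x n + c n) (x : X) (m : ι) :
    T u x m - T w x m ≤ B.mulVec c m := by
  have hmono_shift := hmono u hu _ (hshift w hw c hc) hle x m
  have hdisc_shift := hdisc w hw c hc x m
  linarith

end PerovContraction

theorem stmt_6_general {X : Type*} {N : ℕ} (V : Set (X → Fin N → ℝ))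
    -- upward shift: closed under addition of nonnegative constant vectors
    (hshift : ∀ v ∈ V, ∀ c : Fin N → ℝ, (∀ n, 0 ≤ c n) →
      (fun x n => v x n + c n) ∈ V)
    -- bounded difference
    (hbdd : ∀ u ∈ V, ∀ v ∈ V, ∀ n : Fin N,
      BddAbove (Set.range fun x => |u x n - v x n|))
    (B : Matrix (Fin N) (Fin N) ℝ) (hB : ∀ m n, 0 ≤ B m n)
    (T : (X → Fin N → ℝ) → (X → Fin N → ℝ))
    -- monotonicity
    (hmono : ∀ u ∈ V, ∀ v ∈ V, (∀ x n, u x n ≤ v x n) →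
      ∀ x n, T u x n ≤ T v x n)
    -- discounting
    (hdisc : ∀ v ∈ V, ∀ c : Fin N → ℝ, (∀ n, 0 ≤ c n) →
      ∀ x m, T (fun x n => v x n + c n) x m ≤ T v x m + (B.mulVec c) m) :
    ∀ v₁ ∈ V, ∀ v₂ ∈ V, ∀ m : Fin N,
      (⨆ x, |T v₁ x m - T v₂ x m|) ≤
        (B.mulVec (fun n => ⨆ x, |v₁ x n - v₂ x n|)) m := by
  intro v₁ hv₁ v₂ hv₂ m
  have hsymm : supDist v₂ v₁ = supDist v₁ v₂ := by
    funext n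
    simp only [supDist, abs_sub_comm]
  have h₁₂ := sub_le_mulVec_of_le_add hshift hmono hdisc hv₁ hv₂ (supDist_nonneg v₁ v₂)
    (fun x n => le_add_supDist (hbdd v₁ hv₁ v₂ hv₂ n) x)
  have h₂₁ := sub_le_mulVec_of_le_add hshift hmono hdisc hv₂ hv₁ (supDist_nonneg v₂ v₁)
    (fun x n => le_add_supDist (hbdd v₂ hv₂ v₁ hv₁ n) x)
  rw [hsymm] at h₂₁
  exact Real.iSup_le (fun x => abs_sub_le_iff.mpr ⟨h₁₂ x m, h₂₁ x m⟩)
    (mulVec_nonneg_of_nonneg hB (supDist_nonneg v₁ v₂) m)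

/-- Generalized Blackwell sufficient condition: a monotone operator with
matrix discounting is a Perov contraction with coefficient matrix `B`. -/
theorem stmt_6 {X : Type*} {N : ℕ} (V : Set (X → Fin N → ℝ))
    -- upward shift: closed under addition of nonnegative constant vectors
    (hshift : ∀ v ∈ V, ∀ c : Fin N → ℝ, (∀ n, 0 ≤ c n) →
      (fun x n => v x n + c n) ∈ V)
    -- bounded difference
    (hbdd : ∀ u ∈ V, ∀ v ∈ V, ∀ n : Fin N,
      BddAbove (Set.range fun x => |u x n - v x n|))
    (B : Matrix (Fin N) (Fin N) ℝ) (hB : ∀ m n, 0 ≤ B m n)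
    (hρ : specRad B < 1)
    (T : (X → Fin N → ℝ) → (X → Fin N → ℝ))
    (hTmap : ∀ v ∈ V, T v ∈ V)
    -- monotonicity
    (hmono : ∀ u ∈ V, ∀ v ∈ V, (∀ x n, u x n ≤ v x n) →
      ∀ x n, T u x n ≤ T v x n)
    -- discounting
    (hdisc : ∀ v ∈ V, ∀ c : Fin N → ℝ, (∀ n, 0 ≤ c n) →
      ∀ x m, T (fun x n => v x n + c n) x m ≤ T v x m + (B.mulVec c) m) :
    ∀ v₁ ∈ V, ∀ v₂ ∈ V, ∀ m : Fin N,
      (⨆ x, |T v₁ x m - T v₂ x m|) ≤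
        (B.mulVec (fun n => ⨆ x, |v₁ x n - v₂ x n|)) m :=
  stmt_6_general V hshift hbdd B hB T hmono hdisc
end
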